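/- arXiv:1005.4090 — 3 statements merged into one kernel-verified Lean document; each statement's English description precedes it below -/
import Mathlib

section
/- For every g = (z,t) ∈ V₁ × V₂: Xa(g) = 4A(g), i.e. X_v a(g) = 4⟨A(g), v⟩ for all v ∈ V₁; the symmetrized second horizontal derivative of a is a_{,uv}(g) = 4ψ(g)⟨u,v⟩ + 8(⟨z,u⟩⟨z,v⟩ + ⟨[z,u],[z,v]⟩) for all u, v ∈ V₁; and if the data is of Heisenberg type, then |Xa(g)|² = 16 ψ(g) a(g). -/
open scoped RealInnerProductSpace
open MeasureTheory

noncomputable section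

variable {V₁ V₂ : Type*} [NormedAddCommGroup V₁] [InnerProductSpace ℝ V₁]
  [NormedAddCommGroup V₂] [InnerProductSpace ℝ V₂]

/-- The horizontal derivative of `f : V₁ × V₂ → ℝ` at `g = (z,t)` in the horizontal
direction `v ∈ V₁`, namely `Df(g)(v, ½[z,v])`. -/
def Xd (b : V₁ →ₗ[ℝ] V₁ →ₗ[ℝ] V₂) (v : V₁) (f : V₁ × V₂ → ℝ) (g : V₁ × V₂) : ℝ :=
  fderiv ℝ f g (v, (2⁻¹ : ℝ) • b g.1 v)

/-- The horizontal gradient: the unique vector of `V₁` representing the linear functional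
`v ↦ X_v f (g)` via the inner product of `V₁`. -/
def Xgrad [FiniteDimensional ℝ V₁] [FiniteDimensional ℝ V₂]
    (b : V₁ →ₗ[ℝ] V₁ →ₗ[ℝ] V₂) (f : V₁ × V₂ → ℝ) (g : V₁ × V₂) : V₁ :=
  (InnerProductSpace.toDual ℝ V₁).symm
    (LinearMap.toContinuousLinearMap
      ((fderiv ℝ f g).toLinearMap.comp
        (LinearMap.prod LinearMap.id ((2⁻¹ : ℝ) • b g.1))))

/-- The symmetrized second horizontal derivative `f_{,uv} = ½(X_u X_v f + X_v X_u f)`. -/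
def X2sym (b : V₁ →ₗ[ℝ] V₁ →ₗ[ℝ] V₂) (u v : V₁) (f : V₁ × V₂ → ℝ) (g : V₁ × V₂) : ℝ :=
  (Xd b u (Xd b v f) g + Xd b v (Xd b u f) g) / 2

/-- The horizontal (sub-)Laplacian `𝓛 f = Σᵢ X_{eᵢ} X_{eᵢ} f`. -/
def hLap [FiniteDimensional ℝ V₁] (b : V₁ →ₗ[ℝ] V₁ →ₗ[ℝ] V₂) (f : V₁ × V₂ → ℝ)
    (g : V₁ × V₂) : ℝ :=
  ∑ i, Xd b (stdOrthonormalBasis ℝ V₁ i) (Xd b (stdOrthonormalBasis ℝ V₁ i) f) g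

/-- The horizontal ∞-Laplacian `𝓛_∞ f = Σ_{i,j} f_{,eᵢeⱼ} X_{eᵢ}f X_{eⱼ}f`. -/
def hInfLap [FiniteDimensional ℝ V₁] (b : V₁ →ₗ[ℝ] V₁ →ₗ[ℝ] V₂) (f : V₁ × V₂ → ℝ)
    (g : V₁ × V₂) : ℝ :=
  ∑ i, ∑ j, X2sym b (stdOrthonormalBasis ℝ V₁ i) (stdOrthonormalBasis ℝ V₁ j) f g *
    Xd b (stdOrthonormalBasis ℝ V₁ i) f g * Xd b (stdOrthonormalBasis ℝ V₁ j) f g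

/-- `ψ(z,t) = |z|²`. -/
def psiF (g : V₁ × V₂) : ℝ := ‖g.1‖ ^ 2

/-- `χ(z,t) = |t|²`. -/
def chiF (g : V₁ × V₂) : ℝ := ‖g.2‖ ^ 2

/-- `a(z,t) = ψ² + 16χ = |z|⁴ + 16|t|²`. -/
def aF (g : V₁ × V₂) : ℝ := psiF g ^ 2 + 16 * chiF g

/-- The Folland–Kaplan gauge `N = a^{1/4}`. -/
def Ng (g : V₁ × V₂) : ℝ := aF g ^ ((1 : ℝ) / 4)

/-- `A(z,t) = |z|² z + 4 J(t) z`. -/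
def Ag (J : V₂ → V₁ →ₗ[ℝ] V₁) (g : V₁ × V₂) : V₁ :=
  ‖g.1‖ ^ 2 • g.1 + (4 : ℝ) • J g.2 g.1

/-- The group law `(z,t)·(z',t') = (z+z', t+t'+½[z,z'])`. -/
def gmul (b : V₁ →ₗ[ℝ] V₁ →ₗ[ℝ] V₂) (g h : V₁ × V₂) : V₁ × V₂ :=
  (g.1 + h.1, g.2 + h.2 + (2⁻¹ : ℝ) • b g.1 h.1)

/-- The group inverse `(z,t)⁻¹ = (−z,−t)`. -/
def ginv (g : V₁ × V₂) : V₁ × V₂ := (-g.1, -g.2)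

end

/-! `a = |z|⁴ + 16|t|²` is a polynomial, and `X_v a(z,t) = 4|z|²⟨z,v⟩ + 16⟨t,[z,v]⟩`, which is
`4⟨A(z,t), v⟩` by the defining relation of `J`. Differentiating once more, the only term that is
not symmetric in `u, v` is `16⟨t,[u,v]⟩`, and it cancels in the symmetrization by skew-symmetry.
In the H-type case `J(t)z ⊥ z`, because `⟨J(t)z, z⟩ = ⟨[z,z], t⟩ = 0`, so
`|A|² = |z|⁶ + 16|t|²|z|² = ψ a`. -/

section Gauge

variable {V₁ V₂ : Type*} [NormedAddCommGroup V₁] [InnerProductSpace ℝ V₁]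
  [NormedAddCommGroup V₂] [InnerProductSpace ℝ V₂]

lemma fderiv_aF_apply (g p : V₁ × V₂) :
    fderiv ℝ aF g p = 4 * ‖g.1‖ ^ 2 * ⟪g.1, p.1⟫ + 32 * ⟪g.2, p.2⟫ := by
  have hz := (hasFDerivAt_fst (𝕜 := ℝ) (p := g)).norm_sq
  have ht := (hasFDerivAt_snd (𝕜 := ℝ) (p := g)).norm_sq
  have ha : HasFDerivAt (fun g : V₁ × V₂ => (‖g.1‖ ^ 2) ^ 2 + 16 * ‖g.2‖ ^ 2) _ g :=
    (hz.pow 2).add (ht.const_mul 16)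
  unfold aF psiF chiF
  rw [ha.fderiv]
  simp only [Nat.add_one_sub_one, pow_one, nsmul_eq_mul, Nat.cast_ofNat,
    add_apply, smul_apply, ContinuousLinearMap.comp_apply,
    ContinuousLinearMap.coe_fst', ContinuousLinearMap.coe_snd', coe_innerSL_apply, smul_eq_mul]
  ring

lemma Xd_aF (b : V₁ →ₗ[ℝ] V₁ →ₗ[ℝ] V₂) (v : V₁) :
    Xd b v aF = fun g => 4 * ‖g.1‖ ^ 2 * ⟪g.1, v⟫ + 16 * ⟪g.2, b g.1 v⟫ := by
  funext g
  rw [Xd, fderiv_aF_apply, real_inner_smul_right]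
  ring

lemma Xd_Xd_aF [FiniteDimensional ℝ V₁] (b : V₁ →ₗ[ℝ] V₁ →ₗ[ℝ] V₂) (u v : V₁)
    (g : V₁ × V₂) :
    Xd b u (Xd b v aF) g = 4 * ‖g.1‖ ^ 2 * ⟪u, v⟫ + 8 * ⟪g.1, u⟫ * ⟪g.1, v⟫
      + 16 * ⟪g.2, b u v⟫ + 8 * ⟪b g.1 u, b g.1 v⟫ := by
  have hz : HasFDerivAt (fun g : V₁ × V₂ => g.1) (ContinuousLinearMap.fst ℝ V₁ V₂) g :=
    hasFDerivAt_fst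
  have ht : HasFDerivAt (fun g : V₁ × V₂ => g.2) (ContinuousLinearMap.snd ℝ V₁ V₂) g :=
    hasFDerivAt_snd
  set L : V₁ →L[ℝ] V₂ := LinearMap.toContinuousLinearMap (b.flip v) with hL
  have hbv : HasFDerivAt (fun g : V₁ × V₂ => b g.1 v) (L.comp (.fst ℝ V₁ V₂)) g :=
    (L.comp (.fst ℝ V₁ V₂)).hasFDerivAt
  have hXv : HasFDerivAt (fun g : V₁ × V₂ => 4 * ‖g.1‖ ^ 2 * ⟪g.1, v⟫ + 16 * ⟪g.2, b g.1 v⟫)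
      _ g :=
    (hz.norm_sq.const_mul 4).mul (hz.inner ℝ (hasFDerivAt_const v g)) |>.add
      ((ht.inner ℝ hbv).const_mul 16)
  rw [Xd, Xd_aF, hXv.fderiv]
  simp only [hL, add_apply, smul_apply,
    ContinuousLinearMap.comp_apply, ContinuousLinearMap.prod_apply, ContinuousLinearMap.coe_fst',
    ContinuousLinearMap.coe_snd', zero_apply, fderivInnerCLM_apply,
    inner_zero_right, zero_add, smul_eq_mul, coe_innerSL_apply, nsmul_eq_mul, Nat.cast_ofNat,
    LinearMap.coe_toContinuousLinearMap', LinearMap.flip_apply, real_inner_smul_right,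
    real_inner_comm]
  ring

lemma Xgrad_eq_of_forall_Xd_eq [FiniteDimensional ℝ V₁] [FiniteDimensional ℝ V₂]
    {b : V₁ →ₗ[ℝ] V₁ →ₗ[ℝ] V₂} {f : V₁ × V₂ → ℝ} {g : V₁ × V₂} {w : V₁}
    (h : ∀ v, Xd b v f g = ⟪w, v⟫) : Xgrad b f g = w := by
  rw [Xgrad, LinearIsometryEquiv.symm_apply_eq]
  ext v
  exact h v

section HType

variable {b : V₁ →ₗ[ℝ] V₁ →ₗ[ℝ] V₂} {J : V₂ → V₁ →ₗ[ℝ] V₁}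

lemma Xd_aF_eq_inner_Ag (hJ : ∀ (t : V₂) (z z' : V₁), ⟪J t z, z'⟫ = ⟪b z z', t⟫)
    (g : V₁ × V₂) (v : V₁) : Xd b v aF g = 4 * ⟪Ag J g, v⟫ := by
  simp only [Xd_aF, Ag, inner_add_left, real_inner_smul_left, hJ, real_inner_comm g.2]
  ring

lemma Xgrad_aF [FiniteDimensional ℝ V₁] [FiniteDimensional ℝ V₂]
    (hJ : ∀ (t : V₂) (z z' : V₁), ⟪J t z, z'⟫ = ⟪b z z', t⟫) (g : V₁ × V₂) :
    Xgrad b aF g = (4 : ℝ) • Ag J g :=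
  Xgrad_eq_of_forall_Xd_eq fun v => by rw [Xd_aF_eq_inner_Ag hJ, real_inner_smul_left]

lemma X2sym_aF [FiniteDimensional ℝ V₁] (hskew : ∀ z z' : V₁, b z z' = - b z' z)
    (g : V₁ × V₂) (u v : V₁) :
    X2sym b u v aF g =
      4 * psiF g * ⟪u, v⟫ + 8 * (⟪g.1, u⟫ * ⟪g.1, v⟫ + ⟪b g.1 u, b g.1 v⟫) := by
  rw [X2sym, Xd_Xd_aF, Xd_Xd_aF, hskew v u, inner_neg_right, real_inner_comm v u,
    real_inner_comm (b g.1 v), psiF]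
  ring

lemma norm_Ag_sq (hskew : ∀ z z' : V₁, b z z' = - b z' z)
    (hJ : ∀ (t : V₂) (z z' : V₁), ⟪J t z, z'⟫ = ⟪b z z', t⟫)
    (hH : ∀ (t : V₂) (z : V₁), ‖J t z‖ = ‖t‖ * ‖z‖) (g : V₁ × V₂) :
    ‖Ag J g‖ ^ 2 = psiF g * aF g := by
  have horth : ⟪g.1, J g.2 g.1⟫ = 0 := by
    have : IsAddTorsionFree V₂ := .of_isTorsionFree ℝ V₂
    rw [real_inner_comm, hJ, self_eq_neg.mp (hskew g.1 g.1), inner_zero_left]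
  rw [Ag, norm_add_sq_real, real_inner_smul_left, real_inner_smul_right, horth,
    norm_smul, norm_smul, hH]
  simp only [psiF, aF, chiF, Real.norm_eq_abs, abs_pow, abs_norm]
  norm_num
  ring

end HType

end Gauge

theorem riesz_htype_deriv_a_general {V₁ V₂ : Type*} [NormedAddCommGroup V₁] [InnerProductSpace ℝ V₁]
    [FiniteDimensional ℝ V₁] [NormedAddCommGroup V₂] [InnerProductSpace ℝ V₂]
    [FiniteDimensional ℝ V₂]
    (b : V₁ →ₗ[ℝ] V₁ →ₗ[ℝ] V₂) (hskew : ∀ z z' : V₁, b z z' = - b z' z)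
    (J : V₂ → V₁ →ₗ[ℝ] V₁) (hJ : ∀ (t : V₂) (z z' : V₁), ⟪J t z, z'⟫ = ⟪b z z', t⟫) :
    (∀ (g : V₁ × V₂) (v : V₁), Xd b v aF g = 4 * ⟪Ag J g, v⟫) ∧
    (∀ g : V₁ × V₂, Xgrad b aF g = (4 : ℝ) • Ag J g) ∧
    (∀ (g : V₁ × V₂) (u v : V₁),
      X2sym b u v aF g =
        4 * psiF g * ⟪u, v⟫ + 8 * (⟪g.1, u⟫ * ⟪g.1, v⟫ + ⟪b g.1 u, b g.1 v⟫)) ∧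
    ((∀ (t : V₂) (z : V₁), ‖J t z‖ = ‖t‖ * ‖z‖) →
      ∀ g : V₁ × V₂, ‖Xgrad b aF g‖ ^ 2 = 16 * psiF g * aF g) := by
  refine ⟨Xd_aF_eq_inner_Ag hJ, Xgrad_aF hJ, X2sym_aF hskew, fun hH g => ?_⟩
  rw [Xgrad_aF hJ, norm_smul, mul_pow, norm_Ag_sq hskew hJ hH]
  norm_num
  ring

theorem riesz_htype_deriv_a {V₁ V₂ : Type*} [NormedAddCommGroup V₁] [InnerProductSpace ℝ V₁]
    [FiniteDimensional ℝ V₁] [NormedAddCommGroup V₂] [InnerProductSpace ℝ V₂]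
    [FiniteDimensional ℝ V₂] (m k : ℕ) (hm : 1 ≤ m) (hk : 1 ≤ k)
    (hdV₁ : Module.finrank ℝ V₁ = m) (hdV₂ : Module.finrank ℝ V₂ = k)
    (b : V₁ →ₗ[ℝ] V₁ →ₗ[ℝ] V₂) (hskew : ∀ z z' : V₁, b z z' = - b z' z)
    (J : V₂ → V₁ →ₗ[ℝ] V₁) (hJ : ∀ (t : V₂) (z z' : V₁), ⟪J t z, z'⟫ = ⟪b z z', t⟫) :
    (∀ (g : V₁ × V₂) (v : V₁), Xd b v aF g = 4 * ⟪Ag J g, v⟫) ∧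
    (∀ g : V₁ × V₂, Xgrad b aF g = (4 : ℝ) • Ag J g) ∧
    (∀ (g : V₁ × V₂) (u v : V₁),
      X2sym b u v aF g =
        4 * psiF g * ⟪u, v⟫ + 8 * (⟪g.1, u⟫ * ⟪g.1, v⟫ + ⟪b g.1 u, b g.1 v⟫)) ∧
    ((∀ (t : V₂) (z : V₁), ‖J t z‖ = ‖t‖ * ‖z‖) →
      ∀ g : V₁ × V₂, ‖Xgrad b aF g‖ ^ 2 = 16 * psiF g * aF g) :=
  riesz_htype_deriv_a_general b hskew J hJ
end

section
/- For every twice continuously differentiable function f : V₁ × V₂ → ℝ, every g = (z,t) ∈ V₁ × V₂, and all u, v ∈ V₁, the horizontal derivatives satisfy the commutator formula X_u(X_v f)(g) − X_v(X_u f)(g) = Df(g)(0, [u,v]). -/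
/-!
`X_v f (g) = Df(g)(ℓ_v g)` with `ℓ_v (z,t) = (v, ½[z,v])` affine in `g`, so by the product rule
`X_u X_v f (g) = D²f(g)(ℓ_u g, ℓ_v g) + Df(g)(0, ½[u,v])`. The second-order terms cancel in the
commutator by the symmetry of `D²f` (Schwarz), leaving `Df(g)(0, ½([u,v] - [v,u])) = Df(g)(0, [u,v])`.
-/

open scoped RealInnerProductSpace
open MeasureTheory

section HorizontalDerivative

variable {V₁ V₂ : Type*} [NormedAddCommGroup V₁] [InnerProductSpace ℝ V₁]
  [FiniteDimensional ℝ V₁] [NormedAddCommGroup V₂] [InnerProductSpace ℝ V₂]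
  (b : V₁ →ₗ[ℝ] V₁ →ₗ[ℝ] V₂)

theorem hasFDerivAt_horizontalField (v : V₁) (g : V₁ × V₂) :
    HasFDerivAt (fun g : V₁ × V₂ ↦ (v, (2⁻¹ : ℝ) • b g.1 v))
      ((0 : V₁ × V₂ →L[ℝ] V₁).prod
        ((2⁻¹ : ℝ) • (LinearMap.toContinuousLinearMap (b.flip v)).comp
          (ContinuousLinearMap.fst ℝ V₁ V₂))) g :=
  (hasFDerivAt_const v g).prodMk
    ((2⁻¹ : ℝ) • (LinearMap.toContinuousLinearMap (b.flip v)).comp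
      (ContinuousLinearMap.fst ℝ V₁ V₂)).hasFDerivAt

theorem Xd_Xd_eq {f : V₁ × V₂ → ℝ} {g : V₁ × V₂}
    (hf : DifferentiableAt ℝ (fderiv ℝ f) g) (u v : V₁) :
    Xd b u (Xd b v f) g =
      fderiv ℝ (fderiv ℝ f) g (u, (2⁻¹ : ℝ) • b g.1 u) (v, (2⁻¹ : ℝ) • b g.1 v)
        + fderiv ℝ f g (0, (2⁻¹ : ℝ) • b u v) := by
  have hXd : HasFDerivAt (Xd b v f) _ g :=
    hf.hasFDerivAt.clm_apply (hasFDerivAt_horizontalField b v g)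
  rw [Xd, hXd.fderiv]
  simp [add_comm]

theorem Xd_commutator {f : V₁ × V₂ → ℝ} {g : V₁ × V₂} (hf : ContDiffAt ℝ 2 f g) (u v : V₁) :
    Xd b u (Xd b v f) g - Xd b v (Xd b u f) g =
      fderiv ℝ f g (0, (2⁻¹ : ℝ) • (b u v - b v u)) := by
  have hdiff : DifferentiableAt ℝ (fderiv ℝ f) g :=
    (hf.fderiv_right le_rfl).differentiableAt one_ne_zero
  rw [Xd_Xd_eq b hdiff, Xd_Xd_eq b hdiff,
    hf.isSymmSndFDerivAt (by simp) (v, _) (u, _), add_sub_add_left_eq_sub, ← map_sub,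
    Prod.mk_sub_mk, sub_zero, smul_sub]

end HorizontalDerivative

theorem riesz_htype_horizontal_commutator_general {V₁ V₂ : Type*} [NormedAddCommGroup V₁] [InnerProductSpace ℝ V₁]
    [FiniteDimensional ℝ V₁] [NormedAddCommGroup V₂] [InnerProductSpace ℝ V₂]
    (b : V₁ →ₗ[ℝ] V₁ →ₗ[ℝ] V₂) (hskew : ∀ z z' : V₁, b z z' = - b z' z) :
    ∀ f : V₁ × V₂ → ℝ, ContDiff ℝ 2 f → ∀ (g : V₁ × V₂) (u v : V₁),
      Xd b u (Xd b v f) g - Xd b v (Xd b u f) g = fderiv ℝ f g (0, b u v) := by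
  intro f hf g u v
  have hbracket : (2⁻¹ : ℝ) • (b u v - b v u) = b u v := by
    rw [hskew v u]
    module
  rw [Xd_commutator b hf.contDiffAt, hbracket]

theorem riesz_htype_horizontal_commutator {V₁ V₂ : Type*} [NormedAddCommGroup V₁] [InnerProductSpace ℝ V₁]
    [FiniteDimensional ℝ V₁] [NormedAddCommGroup V₂] [InnerProductSpace ℝ V₂]
    [FiniteDimensional ℝ V₂] (m k : ℕ) (hm : 1 ≤ m) (hk : 1 ≤ k)
    (hdV₁ : Module.finrank ℝ V₁ = m) (hdV₂ : Module.finrank ℝ V₂ = k)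
    (b : V₁ →ₗ[ℝ] V₁ →ₗ[ℝ] V₂) (hskew : ∀ z z' : V₁, b z z' = - b z' z) :
    ∀ f : V₁ × V₂ → ℝ, ContDiff ℝ 2 f → ∀ (g : V₁ × V₂) (u v : V₁),
      Xd b u (Xd b v f) g - Xd b v (Xd b u f) g = fderiv ℝ f g (0, b u v) :=
  riesz_htype_horizontal_commutator_general b hskew
end

section
/- Assume the data is of Heisenberg type, and define u(g) = log N(g) for g ≠ e. Then for every g ∈ G with g ≠ e one has |Xu(g)|² 𝓛u(g) + (Q−2) 𝓛_∞u(g) = 0, i.e. u is Q-harmonic on G ∖ {e}. -/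
open scoped RealInnerProductSpace
open MeasureTheory

/-!
With `a = |z|⁴ + 16|t|²` one has `u = ¼ log a` and `X_v a = 4⟪A, v⟫`, so `Xu = a⁻¹ A` and the
horizontal Hessian of `u` is an explicit bilinear form built from `A`, `z` and `[z, ·]`.
The H-type identities `|A|² = |z|² a`, `⟪z, A⟫ = |z|⁴` and `[z, A] = 4|z|² t` reduce everything to
functions of `|z|²` and `a`: `|Xu|² = |z|² / a`, `𝓛u = (Q - 2) |z|² / a` and `𝓛_∞u = -|z|⁴ / a²`.
In the trace of the Hessian, `m` comes from the term `|z|² ⟪v, w⟫` and `2k` from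
`Σᵢ |[z, eᵢ]|² = k |z|²`, the Hilbert–Schmidt norm of `[z, ·]` computed through its adjoint `J(·) z`.
-/

open Filter Topology

section HorizontalCalculus

variable {V₁ V₂ : Type*} [NormedAddCommGroup V₁] [InnerProductSpace ℝ V₁]
  [NormedAddCommGroup V₂] [InnerProductSpace ℝ V₂]
  (b : V₁ →ₗ[ℝ] V₁ →ₗ[ℝ] V₂) (v : V₁) {f h : V₁ × V₂ → ℝ} {g : V₁ × V₂}

theorem Xd_congr (hfh : f =ᶠ[𝓝 g] h) : Xd b v f g = Xd b v h g := by
  rw [Xd, Xd, hfh.fderiv_eq]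

theorem Xd_eventuallyEq (hfh : f =ᶠ[𝓝 g] h) : Xd b v f =ᶠ[𝓝 g] Xd b v h :=
  hfh.eventuallyEq_nhds.mono fun _ => Xd_congr b v

theorem Xd_add (hf : DifferentiableAt ℝ f g) (hh : DifferentiableAt ℝ h g) :
    Xd b v (fun g => f g + h g) g = Xd b v f g + Xd b v h g := by
  simp only [Xd, fderiv_fun_add hf hh, add_apply]

theorem Xd_mul (hf : DifferentiableAt ℝ f g) (hh : DifferentiableAt ℝ h g) :
    Xd b v (fun g => f g * h g) g = Xd b v f g * h g + f g * Xd b v h g := by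
  simp only [Xd, fderiv_fun_mul hf hh, add_apply, smul_apply, smul_eq_mul]
  ring

theorem Xd_const_mul (hf : DifferentiableAt ℝ f g) (c : ℝ) :
    Xd b v (fun g => c * f g) g = c * Xd b v f g := by
  simp only [Xd, fderiv_const_mul hf, smul_apply, smul_eq_mul]

theorem Xd_comp {φ : ℝ → ℝ} {φ' : ℝ} (hφ : HasDerivAt φ φ' (f g)) (hf : DifferentiableAt ℝ f g) :
    Xd b v (fun g => φ (f g)) g = φ' * Xd b v f g := by
  rw [Xd, ← Function.comp_def, (hφ.comp_hasFDerivAt g hf.hasFDerivAt).fderiv]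
  rfl

theorem Xd_normSq_fst : Xd b v (fun g : V₁ × V₂ => ‖g.1‖ ^ 2) g = 2 * ⟪g.1, v⟫ := by
  rw [Xd, hasFDerivAt_fst.norm_sq.fderiv]
  simp

theorem Xd_normSq_snd : Xd b v (fun g : V₁ × V₂ => ‖g.2‖ ^ 2) g = ⟪g.2, b g.1 v⟫ := by
  rw [Xd, hasFDerivAt_snd.norm_sq.fderiv]
  simp

theorem Xd_inner_fst (x : V₁) : Xd b v (fun g : V₁ × V₂ => ⟪g.1, x⟫) g = ⟪v, x⟫ := by
  rw [Xd, (hasFDerivAt_fst.inner ℝ (hasFDerivAt_const x g)).fderiv]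
  simp

section FiniteDimensional

variable [FiniteDimensional ℝ V₁]

theorem differentiable_inner_snd_apply (x : V₁) :
    Differentiable ℝ fun g : V₁ × V₂ => ⟪g.2, b g.1 x⟫ :=
  differentiable_snd.inner ℝ
    ((b.flip x).toContinuousLinearMap.differentiable.comp differentiable_fst)

theorem Xd_inner_snd_apply (x : V₁) :
    Xd b v (fun g : V₁ × V₂ => ⟪g.2, b g.1 x⟫) g = ⟪g.2, b v x⟫ + 2⁻¹ * ⟪b g.1 v, b g.1 x⟫ := by
  have hbx : HasFDerivAt (fun g : V₁ × V₂ => b g.1 x)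
      ((b.flip x).toContinuousLinearMap.comp (ContinuousLinearMap.fst ℝ V₁ V₂)) g :=
    (b.flip x).toContinuousLinearMap.hasFDerivAt.comp g hasFDerivAt_fst
  rw [Xd, (hasFDerivAt_snd.inner ℝ hbx).fderiv]
  simp [real_inner_smul_left]

theorem hLap_congr (hfh : f =ᶠ[𝓝 g] h) : hLap b f g = hLap b h g :=
  Finset.sum_congr rfl fun _ _ => Xd_congr b _ (Xd_eventuallyEq b _ hfh)

theorem hInfLap_congr (hfh : f =ᶠ[𝓝 g] h) : hInfLap b f g = hInfLap b h g := by
  simp only [hInfLap, X2sym, Xd_congr b _ (Xd_eventuallyEq b _ hfh), Xd_congr b _ hfh]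

variable [FiniteDimensional ℝ V₂]

theorem inner_Xgrad (f : V₁ × V₂ → ℝ) (g : V₁ × V₂) : ⟪Xgrad b f g, v⟫ = Xd b v f g := by
  rw [Xgrad, InnerProductSpace.toDual_symm_apply]
  rfl

theorem Xgrad_congr (hfh : f =ᶠ[𝓝 g] h) : Xgrad b f g = Xgrad b h g :=
  ext_inner_right ℝ fun v => by rw [inner_Xgrad, inner_Xgrad, Xd_congr b v hfh]

end FiniteDimensional

end HorizontalCalculus

theorem OrthonormalBasis.sum_sum_mul_inner_mul_inner {ι E : Type*} [Fintype ι]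
    [NormedAddCommGroup E] [InnerProductSpace ℝ E] (e : OrthonormalBasis ι ℝ E)
    (B : E →ₗ[ℝ] E →ₗ[ℝ] ℝ) (x : E) :
    ∑ i, ∑ j, B (e i) (e j) * ⟪x, e i⟫ * ⟪x, e j⟫ = B x x := by
  conv_rhs => rw [← e.sum_repr' x]
  simp only [map_sum, map_smul, LinearMap.sum_apply, LinearMap.smul_apply, smul_eq_mul,
    Finset.mul_sum, real_inner_comm x]
  rw [Finset.sum_comm]
  refine Finset.sum_congr rfl fun i _ => Finset.sum_congr rfl fun j _ => ?_
  ring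

section HType

variable {V₁ V₂ : Type*} [NormedAddCommGroup V₁] [InnerProductSpace ℝ V₁]
  [NormedAddCommGroup V₂] [InnerProductSpace ℝ V₂]
  {b : V₁ →ₗ[ℝ] V₁ →ₗ[ℝ] V₂} {J : V₂ → V₁ →ₗ[ℝ] V₁}

theorem apply_self_eq_zero_of_skew (hskew : ∀ z z' : V₁, b z z' = -b z' z) (z : V₁) :
    b z z = 0 := by
  have h := hskew z z
  rwa [eq_neg_iff_add_eq_zero, ← two_smul ℝ, smul_eq_zero, or_iff_right two_ne_zero] at h

theorem inner_J_apply_self (hskew : ∀ z z' : V₁, b z z' = -b z' z)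
    (hJ : ∀ (t : V₂) (z z' : V₁), ⟪J t z, z'⟫ = ⟪b z z', t⟫) (t : V₂) (z : V₁) :
    ⟪J t z, z⟫ = 0 := by
  rw [hJ, apply_self_eq_zero_of_skew hskew, inner_zero_left]

theorem J_add_apply (hJ : ∀ (t : V₂) (z z' : V₁), ⟪J t z, z'⟫ = ⟪b z z', t⟫) (s t : V₂) (z : V₁) :
    J (s + t) z = J s z + J t z :=
  ext_inner_right ℝ fun w => by rw [inner_add_left, hJ, hJ, hJ, inner_add_right]

theorem inner_J_apply_J_apply (hJ : ∀ (t : V₂) (z z' : V₁), ⟪J t z, z'⟫ = ⟪b z z', t⟫)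
    (hH : ∀ (t : V₂) (z : V₁), ‖J t z‖ = ‖t‖ * ‖z‖) (s t : V₂) (z : V₁) :
    ⟪J s z, J t z⟫ = ⟪s, t⟫ * ‖z‖ ^ 2 := by
  rw [real_inner_eq_norm_add_mul_self_sub_norm_mul_self_sub_norm_mul_self_div_two,
    real_inner_eq_norm_add_mul_self_sub_norm_mul_self_sub_norm_mul_self_div_two s,
    ← J_add_apply hJ, hH, hH, hH]
  ring

theorem apply_J_apply_self (hJ : ∀ (t : V₂) (z z' : V₁), ⟪J t z, z'⟫ = ⟪b z z', t⟫)
    (hH : ∀ (t : V₂) (z : V₁), ‖J t z‖ = ‖t‖ * ‖z‖) (t : V₂) (z : V₁) :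
    b z (J t z) = ‖z‖ ^ 2 • t :=
  ext_inner_right ℝ fun s => by
    rw [← hJ, inner_J_apply_J_apply hJ hH, real_inner_smul_left, real_inner_comm]
    ring

theorem sum_norm_apply_stdOrthonormalBasis_sq [FiniteDimensional ℝ V₁] [FiniteDimensional ℝ V₂]
    (hJ : ∀ (t : V₂) (z z' : V₁), ⟪J t z, z'⟫ = ⟪b z z', t⟫)
    (hH : ∀ (t : V₂) (z : V₁), ‖J t z‖ = ‖t‖ * ‖z‖) (z : V₁) :
    ∑ i, ‖b z (stdOrthonormalBasis ℝ V₁ i)‖ ^ 2 = Module.finrank ℝ V₂ * ‖z‖ ^ 2 := by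
  set e := stdOrthonormalBasis ℝ V₁
  set f := stdOrthonormalBasis ℝ V₂
  calc ∑ i, ‖b z (e i)‖ ^ 2 = ∑ α : Fin (Module.finrank ℝ V₂), ∑ i, ⟪J (f α) z, e i⟫ ^ 2 := by
        simp only [← f.sum_sq_inner_right, hJ, real_inner_comm (f _)]
        exact Finset.sum_comm
    _ = ∑ _α : Fin (Module.finrank ℝ V₂), ‖z‖ ^ 2 := by
        simp only [e.sum_sq_inner_left, hH, f.norm_eq_one, one_mul]
    _ = Module.finrank ℝ V₂ * ‖z‖ ^ 2 := by simp

end HType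

section Gauge

variable {V₁ V₂ : Type*} [NormedAddCommGroup V₁] [NormedAddCommGroup V₂] {g : V₁ × V₂}

theorem aF_nonneg (g : V₁ × V₂) : 0 ≤ aF g := by
  unfold aF psiF chiF
  positivity

theorem aF_pos (hg : g ≠ 0) : 0 < aF g := by
  refine (aF_nonneg g).lt_of_ne' fun h => hg ?_
  unfold aF psiF chiF at h
  rw [add_eq_zero_iff_of_nonneg (by positivity) (by positivity)] at h
  simp only [pow_eq_zero_iff, ne_eq, OfNat.ofNat_ne_zero, not_false_eq_true, norm_eq_zero,
    mul_eq_zero, false_or] at h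
  exact Prod.ext h.1 h.2

theorem log_Ng (g : V₁ × V₂) : Real.log (Ng g) = Real.log (aF g) / 4 := by
  rcases (aF_nonneg g).eq_or_lt with h | h
  · rw [Ng, ← h, Real.zero_rpow (by norm_num)]
    simp
  · rw [Ng, Real.log_rpow h]
    ring

variable [InnerProductSpace ℝ V₁] [InnerProductSpace ℝ V₂]
  {b : V₁ →ₗ[ℝ] V₁ →ₗ[ℝ] V₂} {J : V₂ → V₁ →ₗ[ℝ] V₁}

theorem differentiable_aF : Differentiable ℝ (aF : V₁ × V₂ → ℝ) :=
  ((differentiable_fst.norm_sq ℝ).pow 2).add ((differentiable_snd.norm_sq ℝ).const_mul 16)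

theorem inner_Ag (hJ : ∀ (t : V₂) (z z' : V₁), ⟪J t z, z'⟫ = ⟪b z z', t⟫) (g : V₁ × V₂) (v : V₁) :
    ⟪Ag J g, v⟫ = ‖g.1‖ ^ 2 * ⟪g.1, v⟫ + 4 * ⟪g.2, b g.1 v⟫ := by
  rw [Ag, inner_add_left, real_inner_smul_left, real_inner_smul_left, hJ, real_inner_comm g.2]

theorem Xd_aF_s11 (hJ : ∀ (t : V₂) (z z' : V₁), ⟪J t z, z'⟫ = ⟪b z z', t⟫) (v : V₁) :
    Xd b v aF g = 4 * ⟪Ag J g, v⟫ := by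
  have hψ : DifferentiableAt ℝ (fun g : V₁ × V₂ => ‖g.1‖ ^ 2) g :=
    differentiableAt_fst.norm_sq ℝ
  have hχ : DifferentiableAt ℝ (fun g : V₁ × V₂ => ‖g.2‖ ^ 2) g :=
    differentiableAt_snd.norm_sq ℝ
  change Xd b v (fun g => (‖g.1‖ ^ 2) ^ 2 + 16 * ‖g.2‖ ^ 2) g = _
  rw [Xd_add b v (hψ.fun_pow 2) (hχ.const_mul 16), Xd_comp b v (hasDerivAt_pow 2 _) hψ,
    Xd_const_mul b v hχ, Xd_normSq_fst, Xd_normSq_snd, inner_Ag hJ]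
  ring

theorem Xd_log_Ng (hJ : ∀ (t : V₂) (z z' : V₁), ⟪J t z, z'⟫ = ⟪b z z', t⟫) (hg : g ≠ 0) (v : V₁) :
    Xd b v (fun g => Real.log (Ng g)) g = ⟪Ag J g, v⟫ / aF g := by
  have hlog := (Real.hasDerivAt_log (aF_pos hg).ne').div_const 4
  simp only [log_Ng]
  rw [Xd_comp b v hlog (differentiable_aF g), Xd_aF_s11 hJ]
  field_simp

theorem sq_norm_Ag (hskew : ∀ z z' : V₁, b z z' = -b z' z)
    (hJ : ∀ (t : V₂) (z z' : V₁), ⟪J t z, z'⟫ = ⟪b z z', t⟫)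
    (hH : ∀ (t : V₂) (z : V₁), ‖J t z‖ = ‖t‖ * ‖z‖) (g : V₁ × V₂) :
    ‖Ag J g‖ ^ 2 = ‖g.1‖ ^ 2 * aF g := by
  rw [Ag, norm_add_sq_real, real_inner_smul_left, real_inner_smul_right, real_inner_comm,
    inner_J_apply_self hskew hJ, norm_smul, norm_smul, hH, aF, psiF, chiF]
  simp only [norm_pow, norm_norm, Real.norm_ofNat]
  ring

theorem inner_fst_Ag (hskew : ∀ z z' : V₁, b z z' = -b z' z)
    (hJ : ∀ (t : V₂) (z z' : V₁), ⟪J t z, z'⟫ = ⟪b z z', t⟫) (g : V₁ × V₂) :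
    ⟪g.1, Ag J g⟫ = ‖g.1‖ ^ 4 := by
  rw [real_inner_comm, inner_Ag hJ, apply_self_eq_zero_of_skew hskew, inner_zero_right,
    real_inner_self_eq_norm_sq]
  ring

theorem apply_fst_Ag (hskew : ∀ z z' : V₁, b z z' = -b z' z)
    (hJ : ∀ (t : V₂) (z z' : V₁), ⟪J t z, z'⟫ = ⟪b z z', t⟫)
    (hH : ∀ (t : V₂) (z : V₁), ‖J t z‖ = ‖t‖ * ‖z‖) (g : V₁ × V₂) :
    b g.1 (Ag J g) = (4 * ‖g.1‖ ^ 2) • g.2 := by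
  rw [Ag, map_add, map_smul, map_smul, apply_self_eq_zero_of_skew hskew, smul_zero, zero_add,
    apply_J_apply_self hJ hH, smul_smul]

end Gauge

section LogGauge

variable {V₁ V₂ : Type*} [NormedAddCommGroup V₁] [InnerProductSpace ℝ V₁]
  [NormedAddCommGroup V₂] [InnerProductSpace ℝ V₂]
  {b : V₁ →ₗ[ℝ] V₁ →ₗ[ℝ] V₂} {J : V₂ → V₁ →ₗ[ℝ] V₁} {g : V₁ × V₂}

/-- The antisymmetric term `4⟪t, [w, v]⟫ / a` of `Xd_Xd_log_Ng` drops out under symmetrisation. -/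
noncomputable def logGaugeHessian (b : V₁ →ₗ[ℝ] V₁ →ₗ[ℝ] V₂) (J : V₂ → V₁ →ₗ[ℝ] V₁) (g : V₁ × V₂) :
    V₁ →ₗ[ℝ] V₁ →ₗ[ℝ] ℝ :=
  LinearMap.mk₂ ℝ (fun v w => -4 / aF g ^ 2 * (⟪Ag J g, v⟫ * ⟪Ag J g, w⟫) +
      (aF g)⁻¹ * (2 * (⟪g.1, v⟫ * ⟪g.1, w⟫) + ‖g.1‖ ^ 2 * ⟪v, w⟫ + 2 * ⟪b g.1 v, b g.1 w⟫))
    (fun _ _ _ => by simp only [inner_add_left, inner_add_right, map_add]; ring)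
    (fun _ _ _ => by simp only [real_inner_smul_left, real_inner_smul_right, map_smul]; ring)
    (fun _ _ _ => by simp only [inner_add_right, map_add]; ring)
    (fun _ _ _ => by simp only [real_inner_smul_right, map_smul]; ring)

theorem logGaugeHessian_Ag_Ag (hskew : ∀ z z' : V₁, b z z' = -b z' z)
    (hJ : ∀ (t : V₂) (z z' : V₁), ⟪J t z, z'⟫ = ⟪b z z', t⟫)
    (hH : ∀ (t : V₂) (z : V₁), ‖J t z‖ = ‖t‖ * ‖z‖) (hg : g ≠ 0) :
    logGaugeHessian b J g (Ag J g) (Ag J g) = -‖g.1‖ ^ 4 := by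
  have ha := (aF_pos hg).ne'
  rw [logGaugeHessian, LinearMap.mk₂_apply, inner_fst_Ag hskew hJ, apply_fst_Ag hskew hJ hH,
    real_inner_self_eq_norm_sq, real_inner_self_eq_norm_sq, sq_norm_Ag hskew hJ hH, norm_smul]
  have hχ : 16 * ‖g.2‖ ^ 2 = aF g - ‖g.1‖ ^ 4 := by
    unfold aF psiF chiF
    ring
  simp only [Real.norm_eq_abs, abs_mul, abs_of_nonneg (by positivity : (0 : ℝ) ≤ ‖g.1‖ ^ 2)]
  field_simp
  linear_combination 2 * ‖g.1‖ ^ 4 * hχ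

variable [FiniteDimensional ℝ V₁]

theorem differentiable_inner_Ag (hJ : ∀ (t : V₂) (z z' : V₁), ⟪J t z, z'⟫ = ⟪b z z', t⟫)
    (v : V₁) : Differentiable ℝ fun g : V₁ × V₂ => ⟪Ag J g, v⟫ := by
  simp only [inner_Ag hJ]
  exact ((differentiable_fst.norm_sq ℝ).mul
    (differentiable_fst.inner ℝ (differentiable_const v))).add
      ((differentiable_inner_snd_apply b v).const_mul 4)

theorem Xd_inner_Ag (hJ : ∀ (t : V₂) (z z' : V₁), ⟪J t z, z'⟫ = ⟪b z z', t⟫) (v w : V₁) :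
    Xd b w (fun g => ⟪Ag J g, v⟫) g = 2 * ⟪g.1, w⟫ * ⟪g.1, v⟫ + ‖g.1‖ ^ 2 * ⟪w, v⟫ +
      2 * ⟪b g.1 w, b g.1 v⟫ + 4 * ⟪g.2, b w v⟫ := by
  have hψ : DifferentiableAt ℝ (fun g : V₁ × V₂ => ‖g.1‖ ^ 2) g :=
    differentiableAt_fst.norm_sq ℝ
  have hv : DifferentiableAt ℝ (fun g : V₁ × V₂ => ⟪g.1, v⟫) g :=
    differentiableAt_fst.inner ℝ (differentiableAt_const v)
  simp only [inner_Ag hJ]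
  rw [Xd_add b w (hψ.fun_mul hv) ((differentiable_inner_snd_apply b v g).const_mul 4),
    Xd_mul b w hψ hv, Xd_const_mul b w (differentiable_inner_snd_apply b v g), Xd_normSq_fst,
    Xd_inner_fst, Xd_inner_snd_apply]
  ring

theorem Xd_Xd_log_Ng (hJ : ∀ (t : V₂) (z z' : V₁), ⟪J t z, z'⟫ = ⟪b z z', t⟫) (hg : g ≠ 0)
    (v w : V₁) :
    Xd b w (Xd b v fun g => Real.log (Ng g)) g =
      -4 / aF g ^ 2 * (⟪Ag J g, w⟫ * ⟪Ag J g, v⟫) + (aF g)⁻¹ * (2 * (⟪g.1, w⟫ * ⟪g.1, v⟫) +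
        ‖g.1‖ ^ 2 * ⟪w, v⟫ + 2 * ⟪b g.1 w, b g.1 v⟫ + 4 * ⟪g.2, b w v⟫) := by
  have ha := (aF_pos hg).ne'
  have hev : Xd b v (fun g => Real.log (Ng g)) =ᶠ[𝓝 g] fun g => ⟪Ag J g, v⟫ * (aF g)⁻¹ :=
    (eventually_ne_nhds hg).mono fun g' hg' => by rw [Xd_log_Ng hJ hg', div_eq_mul_inv]
  rw [Xd_congr b w hev,
    Xd_mul b w (differentiable_inner_Ag hJ v g) ((differentiable_aF g).fun_inv ha), Xd_comp b w (hasDerivAt_inv ha) (differentiable_aF g), Xd_inner_Ag hJ, Xd_aF_s11 hJ]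
  field_simp
  ring

theorem X2sym_log_Ng (hskew : ∀ z z' : V₁, b z z' = -b z' z)
    (hJ : ∀ (t : V₂) (z z' : V₁), ⟪J t z, z'⟫ = ⟪b z z', t⟫) (hg : g ≠ 0) (v w : V₁) :
    X2sym b v w (fun g => Real.log (Ng g)) g = logGaugeHessian b J g v w := by
  rw [X2sym, Xd_Xd_log_Ng hJ hg, Xd_Xd_log_Ng hJ hg, hskew w v, inner_neg_right, logGaugeHessian,
    LinearMap.mk₂_apply, real_inner_comm w v, real_inner_comm (b g.1 w)]
  ring

variable [FiniteDimensional ℝ V₂]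

theorem Xgrad_log_Ng (hJ : ∀ (t : V₂) (z z' : V₁), ⟪J t z, z'⟫ = ⟪b z z', t⟫) (hg : g ≠ 0) :
    Xgrad b (fun g => Real.log (Ng g)) g = (aF g)⁻¹ • Ag J g :=
  ext_inner_right ℝ fun v => by
    rw [inner_Xgrad, Xd_log_Ng hJ hg, real_inner_smul_left, div_eq_inv_mul]

theorem sq_norm_Xgrad_log_Ng (hskew : ∀ z z' : V₁, b z z' = -b z' z)
    (hJ : ∀ (t : V₂) (z z' : V₁), ⟪J t z, z'⟫ = ⟪b z z', t⟫)
    (hH : ∀ (t : V₂) (z : V₁), ‖J t z‖ = ‖t‖ * ‖z‖) (hg : g ≠ 0) :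
    ‖Xgrad b (fun g => Real.log (Ng g)) g‖ ^ 2 = ‖g.1‖ ^ 2 / aF g := by
  have ha := (aF_pos hg).ne'
  rw [Xgrad_log_Ng hJ hg, norm_smul, mul_pow, sq_norm_Ag hskew hJ hH, Real.norm_eq_abs, sq_abs]
  field_simp

theorem hLap_log_Ng (hskew : ∀ z z' : V₁, b z z' = -b z' z)
    (hJ : ∀ (t : V₂) (z z' : V₁), ⟪J t z, z'⟫ = ⟪b z z', t⟫)
    (hH : ∀ (t : V₂) (z : V₁), ‖J t z‖ = ‖t‖ * ‖z‖) (hg : g ≠ 0) :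
    hLap b (fun g => Real.log (Ng g)) g =
      (Module.finrank ℝ V₁ + 2 * Module.finrank ℝ V₂ - 2) * ‖g.1‖ ^ 2 / aF g := by
  have ha := (aF_pos hg).ne'
  have hdiag : ∀ v, Xd b v (Xd b v fun g => Real.log (Ng g)) g = logGaugeHessian b J g v v :=
    fun v => by rw [← X2sym_log_Ng hskew hJ hg, X2sym, add_self_div_two]
  simp only [hLap, hdiag, logGaugeHessian, LinearMap.mk₂_apply, Finset.sum_add_distrib,
    ← Finset.mul_sum, ← pow_two, OrthonormalBasis.sum_sq_inner_left, real_inner_self_eq_norm_sq,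
    OrthonormalBasis.norm_eq_one, one_pow, Finset.sum_const, Finset.card_univ, Fintype.card_fin,
    nsmul_one, sum_norm_apply_stdOrthonormalBasis_sq hJ hH, sq_norm_Ag hskew hJ hH]
  field_simp
  ring

theorem hInfLap_log_Ng (hskew : ∀ z z' : V₁, b z z' = -b z' z)
    (hJ : ∀ (t : V₂) (z z' : V₁), ⟪J t z, z'⟫ = ⟪b z z', t⟫)
    (hH : ∀ (t : V₂) (z : V₁), ‖J t z‖ = ‖t‖ * ‖z‖) (hg : g ≠ 0) :
    hInfLap b (fun g => Real.log (Ng g)) g = -‖g.1‖ ^ 4 / aF g ^ 2 := by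
  simp only [hInfLap, X2sym_log_Ng hskew hJ hg, ← inner_Xgrad, Xgrad_log_Ng hJ hg,
    OrthonormalBasis.sum_sum_mul_inner_mul_inner, map_smul, LinearMap.smul_apply,
    logGaugeHessian_Ag_Ag hskew hJ hH hg, smul_eq_mul]
  ring

end LogGauge

theorem riesz_htype_log_N_Q_harmonic_general {V₁ V₂ : Type*} [NormedAddCommGroup V₁] [InnerProductSpace ℝ V₁]
    [FiniteDimensional ℝ V₁] [NormedAddCommGroup V₂] [InnerProductSpace ℝ V₂]
    [FiniteDimensional ℝ V₂] (m k : ℕ)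
    (hdV₁ : Module.finrank ℝ V₁ = m) (hdV₂ : Module.finrank ℝ V₂ = k)
    (b : V₁ →ₗ[ℝ] V₁ →ₗ[ℝ] V₂) (hskew : ∀ z z' : V₁, b z z' = - b z' z)
    (J : V₂ → V₁ →ₗ[ℝ] V₁) (hJ : ∀ (t : V₂) (z z' : V₁), ⟪J t z, z'⟫ = ⟪b z z', t⟫) (hH : ∀ (t : V₂) (z : V₁), ‖J t z‖ = ‖t‖ * ‖z‖)
    (u : V₁ × V₂ → ℝ) (hu : ∀ g : V₁ × V₂, g ≠ (0, 0) → u g = Real.log (Ng g)) :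
    ∀ g : V₁ × V₂, g ≠ (0, 0) →
      ‖Xgrad b u g‖ ^ 2 * hLap b u g + (((m : ℝ) + 2 * k) - 2) * hInfLap b u g = 0 := by
  intro g hg
  have hu_loc : u =ᶠ[𝓝 g] fun g => Real.log (Ng g) := (eventually_ne_nhds hg).mono hu
  have ha := (aF_pos hg).ne'
  rw [Xgrad_congr b hu_loc, hLap_congr b hu_loc, hInfLap_congr b hu_loc,
    sq_norm_Xgrad_log_Ng hskew hJ hH hg, hLap_log_Ng hskew hJ hH hg, hInfLap_log_Ng hskew hJ hH hg,
    hdV₁, hdV₂]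
  field_simp
  ring

theorem riesz_htype_log_N_Q_harmonic {V₁ V₂ : Type*} [NormedAddCommGroup V₁] [InnerProductSpace ℝ V₁]
    [FiniteDimensional ℝ V₁] [NormedAddCommGroup V₂] [InnerProductSpace ℝ V₂]
    [FiniteDimensional ℝ V₂] (m k : ℕ) (hm : 1 ≤ m) (hk : 1 ≤ k)
    (hdV₁ : Module.finrank ℝ V₁ = m) (hdV₂ : Module.finrank ℝ V₂ = k)
    (b : V₁ →ₗ[ℝ] V₁ →ₗ[ℝ] V₂) (hskew : ∀ z z' : V₁, b z z' = - b z' z)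
    (J : V₂ → V₁ →ₗ[ℝ] V₁) (hJ : ∀ (t : V₂) (z z' : V₁), ⟪J t z, z'⟫ = ⟪b z z', t⟫) (hH : ∀ (t : V₂) (z : V₁), ‖J t z‖ = ‖t‖ * ‖z‖)
    (u : V₁ × V₂ → ℝ) (hu : ∀ g : V₁ × V₂, g ≠ (0, 0) → u g = Real.log (Ng g)) :
    ∀ g : V₁ × V₂, g ≠ (0, 0) →
      ‖Xgrad b u g‖ ^ 2 * hLap b u g + (((m : ℝ) + 2 * k) - 2) * hInfLap b u g = 0 :=
  riesz_htype_log_N_Q_harmonic_general m k hdV₁ hdV₂ b hskew J hJ hH u hu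
end
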